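/- Let m ≥ 1, ψ ∈ L²(ℝ^m, ℂ), f ∈ L¹(ℝ^m, ℂ) ∩ L²(ℝ^m, ℂ), T ⊆ ℝ^m and Ω ⊆ (0,∞)×ℝ^m measurable, and ε_T ≥ 0, 0 ≤ ε_Ω < 1. Assume the Parseval identity ‖T_ψ(g)‖_{L²(μ)} = A_ψ · ‖g‖_{L²(ℝ^m)} holds for every g ∈ L²(ℝ^m, ℂ), where A_ψ > 0 is a constant. If f is ε_T-concentrated on T in L²(ℝ^m) and T_ψ(f) is ε_Ω-concentrated on Ω in L²(μ), then ‖T_ψ(f)‖_{L²(μ)} ≤ (A_ψ ε_T + φ_{Ω,T}(ψ)^{1/2}) / (1 − ε_Ω) · ‖f‖_{L²(ℝ^m)}, where φ_{Ω,T}(ψ) = ∫_Ω (∫_{(T−b)/a} |ψ(t)|² dt) dμ(a,b). -/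

import Mathlib

/-!
Split `f = 1_T f + 1_{Tᶜ} f`. By Parseval the transform of `1_{Tᶜ} f` has norm at most
`A_ψ ε_T ‖f‖`. For the transform of `1_T f`, Cauchy–Schwarz at a point `(a, b)` and the substitution
`t = (x - b) / a`, whose Jacobian `a^m` cancels the square of the normalisation `a^(-m/2)`, give
`|T_ψ(1_T f)(a, b)|² ≤ ‖f‖² ∫_{(T-b)/a} |ψ|²`; integrating over `Ω` bounds the `L²(Ω)` norm of
`T_ψ(1_T f)` by `φ_{Ω,T}(ψ)^{1/2} ‖f‖`. Hence
`‖T_ψ f‖ ≤ ‖1_Ω T_ψ f‖ + ε_Ω ‖T_ψ f‖ ≤ (A_ψ ε_T + φ_{Ω,T}(ψ)^{1/2}) ‖f‖ + ε_Ω ‖T_ψ f‖`,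
and the last term can be absorbed because `‖T_ψ f‖ = A_ψ ‖f‖` is finite.
-/

open MeasureTheory Set
open scoped ENNReal

/-- The continuous wavelet transform of `f` with respect to the wavelet `ψ`:
`T_ψ f (a, b) = a^(-m/2) ∫ f x * conj (ψ ((x - b) / a)) dx`. -/
noncomputable def waveletTransform (m : ℕ) (ψ f : EuclideanSpace ℝ (Fin m) → ℂ)
    (p : ℝ × EuclideanSpace ℝ (Fin m)) : ℂ :=
  ((p.1 ^ (-(m : ℝ) / 2) : ℝ) : ℂ) *
    ∫ x, f x * (starRingEnd ℂ) (ψ (p.1⁻¹ • (x - p.2)))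

/-- The measure `dμ(a,b) = a^{-(m+1)} da db` on `(0,∞) × ℝ^m`, realized as a measure on
`ℝ × ℝ^m` supported on `(0,∞) × ℝ^m`. -/
noncomputable def waveletMeasure (m : ℕ) : Measure (ℝ × EuclideanSpace ℝ (Fin m)) :=
  (((volume : Measure ℝ).restrict (Set.Ioi 0)).withDensity
    (fun a => ENNReal.ofReal (a ^ (-((m : ℝ) + 1))))).prod volume

/-- `φ_{Ω,T}(ψ) = ∫_Ω (∫_{(T-b)/a} |ψ t|² dt) dμ(a,b)`. -/
noncomputable def phiOmegaT (m : ℕ) (ψ : EuclideanSpace ℝ (Fin m) → ℂ)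
    (Ω : Set (ℝ × EuclideanSpace ℝ (Fin m))) (T : Set (EuclideanSpace ℝ (Fin m))) : ℝ≥0∞ :=
  ∫⁻ p in Ω, (∫⁻ t in (fun x => p.1⁻¹ • (x - p.2)) '' T, (‖ψ t‖₊ : ℝ≥0∞) ^ 2)
    ∂(waveletMeasure m)

open Module

section AffineRescale

variable {E : Type*} [NormedAddCommGroup E] [NormedSpace ℝ E] [MeasurableSpace E] [BorelSpace E]

noncomputable def affineRescale {a : ℝ} (ha : a ≠ 0) (b : E) : E ≃ᵐ E :=
  (MeasurableEquiv.subRight b).trans (MeasurableEquiv.smul₀ a⁻¹ (inv_ne_zero ha))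

variable [FiniteDimensional ℝ E] (μ : Measure E) [μ.IsAddHaarMeasure] {a : ℝ} (b : E)

lemma map_affineRescale (ha : a ≠ 0) :
    μ.map (affineRescale ha b) = ENNReal.ofReal (|a| ^ finrank ℝ E) • μ := by
  rw [show ⇑(affineRescale ha b) = (a⁻¹ • ·) ∘ (· - b) from rfl,
    ← Measure.map_map (measurable_const_smul _) (measurable_sub_const b),
    map_sub_right_eq_self μ b, Measure.map_addHaar_smul μ (inv_ne_zero ha), inv_pow, inv_inv,
    abs_pow]

lemma quasiMeasurePreserving_affineRescale (ha : a ≠ 0) :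
    Measure.QuasiMeasurePreserving (fun x => a⁻¹ • (x - b)) μ μ :=
  ⟨(affineRescale ha b).measurable, by
    rw [show (fun x => a⁻¹ • (x - b)) = affineRescale ha b from rfl, map_affineRescale]
    exact Measure.smul_absolutelyContinuous⟩

lemma setLIntegral_comp_affineRescale (ha : a ≠ 0) (g : E → ℝ≥0∞) (T : Set E) :
    ∫⁻ x in T, g (a⁻¹ • (x - b)) ∂μ
      = ENNReal.ofReal (|a| ^ finrank ℝ E) * ∫⁻ t in (fun x => a⁻¹ • (x - b)) '' T, g t ∂μ := by
  set e := affineRescale ha b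
  calc ∫⁻ x in T, g (e x) ∂μ = ∫⁻ t in e '' T, g t ∂(μ.map e) := by
        rw [e.restrict_map, e.injective.preimage_image, lintegral_map_equiv]
    _ = _ := by
        rw [map_affineRescale, Measure.restrict_smul, lintegral_smul_measure, smul_eq_mul]
        rfl

lemma MeasureTheory.MemLp.comp_affineRescale {F : Type*} [NormedAddCommGroup F] {ψ : E → F}
    {p : ℝ≥0∞} (hψ : MemLp ψ p μ) (ha : a ≠ 0) : MemLp (fun x => ψ (a⁻¹ • (x - b))) p μ := by
  refine MemLp.comp_of_map (f := affineRescale ha b) ?_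
    (affineRescale ha b).measurable.aemeasurable
  rw [map_affineRescale]
  exact hψ.smul_measure ENNReal.ofReal_ne_top

lemma integrable_mul_conj_comp_affineRescale {𝕜 : Type*} [RCLike 𝕜] {ψ g : E → 𝕜}
    (hψ : MemLp ψ 2 μ) (hg : MemLp g 2 μ) (ha : a ≠ 0) :
    Integrable (fun x => g x * starRingEnd 𝕜 (ψ (a⁻¹ • (x - b)))) μ :=
  hg.integrable_mul (hψ.comp_affineRescale μ b ha).star

lemma eLpNorm_indicator_comp_affineRescale_sq {F : Type*} [NormedAddCommGroup F] (ψ : E → F)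
    (ha : a ≠ 0) {T : Set E} (hT : MeasurableSet T) :
    eLpNorm (T.indicator fun x => ψ (a⁻¹ • (x - b))) 2 μ ^ 2
      = ENNReal.ofReal (|a| ^ finrank ℝ E) *
          ∫⁻ t in (fun x => a⁻¹ • (x - b)) '' T, ‖ψ t‖ₑ ^ 2 ∂μ := by
  rw [eLpNorm_indicator_eq_eLpNorm_restrict hT, ← setLIntegral_comp_affineRescale μ b ha]
  simpa using eLpNorm_nnreal_pow_eq_lintegral (f := fun x => ψ (a⁻¹ • (x - b)))
    (μ := μ.restrict T) (p := 2) two_ne_zero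

end AffineRescale

lemma enorm_integral_mul_conj_le {α 𝕜 : Type*} [MeasurableSpace α] {μ : Measure α} [RCLike 𝕜]
    {u v : α → 𝕜} (hu : AEStronglyMeasurable u μ) (hv : AEStronglyMeasurable v μ) :
    ‖∫ x, u x * starRingEnd 𝕜 (v x) ∂μ‖ₑ ≤ eLpNorm u 2 μ * eLpNorm v 2 μ := by
  calc ‖∫ x, u x * starRingEnd 𝕜 (v x) ∂μ‖ₑ ≤ eLpNorm (fun x => u x * starRingEnd 𝕜 (v x)) 1 μ :=
        (enorm_integral_le_lintegral_enorm _).trans_eq eLpNorm_one_eq_lintegral_enorm.symm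
    _ ≤ 1 * eLpNorm u 2 μ * eLpNorm v 2 μ :=
        eLpNorm_le_eLpNorm_mul_eLpNorm_of_nnnorm hu hv (fun y z => y * starRingEnd 𝕜 z) 1
          (.of_forall fun x => by simp)
    _ = eLpNorm u 2 μ * eLpNorm v 2 μ := by rw [one_mul]

lemma eLpNorm_le_indicator_add_indicator_compl {α F : Type*} [MeasurableSpace α]
    {μ : Measure α} [NormedAddCommGroup F] {g : α → F} {p : ℝ≥0∞} (hp : 1 ≤ p)
    (hg : AEStronglyMeasurable g μ) {s : Set α} (hs : MeasurableSet s) :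
    eLpNorm g p μ ≤ eLpNorm (s.indicator g) p μ + eLpNorm (sᶜ.indicator g) p μ := by
  conv_lhs => rw [← indicator_self_add_compl s g]
  exact eLpNorm_add_le (hg.indicator hs) (hg.indicator hs.compl) hp

lemma ENNReal.le_div_one_sub_of_le_add_mul {x y : ℝ≥0∞} {ε : ℝ} (hε₀ : 0 ≤ ε) (hε₁ : ε < 1)
    (hx : x ≠ ∞) (h : x ≤ y + ENNReal.ofReal ε * x) : x ≤ y / ENNReal.ofReal (1 - ε) := by
  have hsplit : ENNReal.ofReal (1 - ε) * x + ENNReal.ofReal ε * x = x := by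
    rw [← add_mul, ← ENNReal.ofReal_add (by linarith) hε₀, sub_add_cancel, ENNReal.ofReal_one,
      one_mul]
  rw [ENNReal.le_div_iff_mul_le (.inl (by simpa using hε₁)) (.inl ENNReal.ofReal_ne_top), mul_comm]
  refine (ENNReal.add_le_add_iff_right (a := ENNReal.ofReal ε * x)
    (ENNReal.mul_ne_top ENNReal.ofReal_ne_top hx)).mp ?_
  rwa [hsplit]

section WaveletTransform

variable {m : ℕ}
local notation "E" => EuclideanSpace ℝ (Fin m)

lemma ae_waveletMeasure_fst_pos : ∀ᵐ p ∂waveletMeasure m, 0 < p.1 :=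
  Measure.quasiMeasurePreserving_fst.ae <|
    (withDensity_absolutelyContinuous _ _).ae_le (ae_restrict_mem measurableSet_Ioi)

lemma aestronglyMeasurable_waveletTransform {ψ g : E → ℂ}
    (hψ : AEStronglyMeasurable ψ volume) (hg : AEStronglyMeasurable g volume) :
    AEStronglyMeasurable (waveletTransform m ψ g) (waveletMeasure m) := by
  have hqmp : Measure.QuasiMeasurePreserving (fun q : (ℝ × E) × E => q.1.1⁻¹ • (q.2 - q.1.2))
      ((waveletMeasure m).prod volume) volume :=
    QuasiMeasurePreserving.prod_of_right (by fun_prop) <|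
      ae_waveletMeasure_fst_pos.mono fun p hp =>
        quasiMeasurePreserving_affineRescale volume p.2 hp.ne'
  have hintegral :=
    (hg.comp_snd.mul (hψ.comp_quasiMeasurePreserving hqmp).star).integral_prod_right'
  exact (by fun_prop : Measurable fun p : ℝ × E => ((p.1 ^ (-(m : ℝ) / 2) : ℝ) : ℂ))
    |>.aestronglyMeasurable.mul hintegral

lemma waveletTransform_add {ψ g₁ g₂ : E → ℂ} (hψ : MemLp ψ 2 volume) (hg₁ : MemLp g₁ 2 volume)
    (hg₂ : MemLp g₂ 2 volume) {p : ℝ × E} (hp : p.1 ≠ 0) :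
    waveletTransform m ψ (g₁ + g₂) p = waveletTransform m ψ g₁ p + waveletTransform m ψ g₂ p := by
  unfold waveletTransform
  rw [← mul_add, ← integral_add (integrable_mul_conj_comp_affineRescale volume p.2 hψ hg₁ hp)
    (integrable_mul_conj_comp_affineRescale volume p.2 hψ hg₂ hp)]
  simp only [Pi.add_apply, add_mul]

lemma enorm_waveletTransform_indicator_sq_le {ψ f : E → ℂ} (hψ : AEStronglyMeasurable ψ volume)
    (hf : AEStronglyMeasurable f volume) {T : Set E} (hT : MeasurableSet T) {a : ℝ} (ha : 0 < a)
    (b : E) :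
    ‖waveletTransform m ψ (T.indicator f) (a, b)‖ₑ ^ 2
      ≤ eLpNorm f 2 volume ^ 2 * ∫⁻ t in (fun x => a⁻¹ • (x - b)) '' T, ‖ψ t‖ₑ ^ 2 := by
  set ψT := T.indicator fun x => ψ (a⁻¹ • (x - b))
  have hψT : AEStronglyMeasurable ψT volume :=
    (hψ.comp_quasiMeasurePreserving
      (quasiMeasurePreserving_affineRescale volume b ha.ne')).indicator hT
  have hswap (x : E) :
      T.indicator f x * starRingEnd ℂ (ψ (a⁻¹ • (x - b))) = f x * starRingEnd ℂ (ψT x) := by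
    by_cases hx : x ∈ T <;> simp [ψT, hx]
  have hscale : ENNReal.ofReal (a ^ (-(m : ℝ) / 2)) ^ 2 * ENNReal.ofReal (|a| ^ m) = 1 := by
    rw [← ENNReal.ofReal_pow (by positivity), ← ENNReal.ofReal_mul (by positivity), abs_of_pos ha,
      ← Real.rpow_natCast, ← Real.rpow_mul ha.le, ← Real.rpow_natCast, ← Real.rpow_add ha]
    norm_num
  have hnorm : ‖((a ^ (-(m : ℝ) / 2) : ℝ) : ℂ)‖ₑ = ENNReal.ofReal (a ^ (-(m : ℝ) / 2)) := by
    rw [← Real.enorm_eq_ofReal (by positivity)]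
    simp only [enorm_eq_nnnorm, Complex.nnnorm_real]
  calc ‖waveletTransform m ψ (T.indicator f) (a, b)‖ₑ ^ 2
      = (ENNReal.ofReal (a ^ (-(m : ℝ) / 2)) * ‖∫ x, f x * starRingEnd ℂ (ψT x)‖ₑ) ^ 2 := by
        simp only [waveletTransform, hswap, enorm_mul, hnorm]
    _ ≤ (ENNReal.ofReal (a ^ (-(m : ℝ) / 2)) *
          (eLpNorm f 2 volume * eLpNorm ψT 2 volume)) ^ 2 := by
        gcongr
        exact enorm_integral_mul_conj_le hf hψT
    _ = ENNReal.ofReal (a ^ (-(m : ℝ) / 2)) ^ 2 * ENNReal.ofReal (|a| ^ m) *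
          (eLpNorm f 2 volume ^ 2 * ∫⁻ t in (fun x => a⁻¹ • (x - b)) '' T, ‖ψ t‖ₑ ^ 2) := by
        rw [mul_pow, mul_pow, eLpNorm_indicator_comp_affineRescale_sq volume b ψ ha.ne' hT,
          finrank_euclideanSpace_fin]
        ring
    _ = _ := by rw [hscale, one_mul]

lemma eLpNorm_indicator_waveletTransform_indicator_le {ψ f : E → ℂ}
    (hψ : AEStronglyMeasurable ψ volume) (hf : MemLp f 2 volume) {T : Set E}
    (hT : MeasurableSet T) {Ω : Set (ℝ × E)} (hΩ : MeasurableSet Ω) :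
    eLpNorm (Ω.indicator (waveletTransform m ψ (T.indicator f))) 2 (waveletMeasure m)
      ≤ phiOmegaT m ψ Ω T ^ (1 / 2 : ℝ) * eLpNorm f 2 volume := by
  have hsqrt : (phiOmegaT m ψ Ω T ^ (1 / 2 : ℝ)) ^ 2 = phiOmegaT m ψ Ω T := by
    rw [← ENNReal.rpow_natCast, ← ENNReal.rpow_mul]
    norm_num
  rw [← ENNReal.pow_le_pow_left_iff two_ne_zero, mul_pow, hsqrt,
    eLpNorm_indicator_eq_eLpNorm_restrict hΩ]
  calc eLpNorm (waveletTransform m ψ (T.indicator f)) 2 ((waveletMeasure m).restrict Ω) ^ 2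
      = ∫⁻ p in Ω, ‖waveletTransform m ψ (T.indicator f) p‖ₑ ^ 2 ∂waveletMeasure m := by
        simpa using eLpNorm_nnreal_pow_eq_lintegral (f := waveletTransform m ψ (T.indicator f))
          (μ := (waveletMeasure m).restrict Ω) (p := 2) two_ne_zero
    _ ≤ ∫⁻ p in Ω, eLpNorm f 2 volume ^ 2 *
          (∫⁻ t in (fun x => p.1⁻¹ • (x - p.2)) '' T, ‖ψ t‖ₑ ^ 2) ∂waveletMeasure m :=
        lintegral_mono_ae <| (ae_restrict_of_ae ae_waveletMeasure_fst_pos).mono fun p hp =>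
          enorm_waveletTransform_indicator_sq_le hψ hf.1 hT hp p.2
    _ = phiOmegaT m ψ Ω T * eLpNorm f 2 volume ^ 2 := by
        rw [lintegral_const_mul' _ _ (ENNReal.pow_ne_top hf.eLpNorm_ne_top), mul_comm]
        rfl

end WaveletTransform

theorem donoho_stark_waveletTransform_general
    (m : ℕ)
    (ψ f : EuclideanSpace ℝ (Fin m) → ℂ)
    (hψ : MemLp ψ 2 (volume : Measure (EuclideanSpace ℝ (Fin m))))
    (hf2 : MemLp f 2 (volume : Measure (EuclideanSpace ℝ (Fin m))))
    (T : Set (EuclideanSpace ℝ (Fin m))) (hT : MeasurableSet T)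
    (Ω : Set (ℝ × EuclideanSpace ℝ (Fin m))) (hΩ : MeasurableSet Ω)
    (εT εΩ : ℝ) (hεΩ₀ : 0 ≤ εΩ) (hεΩ₁ : εΩ < 1)
    (Aψ : ℝ)
    (hParseval : ∀ g : EuclideanSpace ℝ (Fin m) → ℂ,
      MemLp g 2 (volume : Measure (EuclideanSpace ℝ (Fin m))) →
        eLpNorm (waveletTransform m ψ g) 2 (waveletMeasure m) =
          ENNReal.ofReal Aψ * eLpNorm g 2 (volume : Measure (EuclideanSpace ℝ (Fin m))))
    (hconcT : eLpNorm (Tᶜ.indicator f) 2 (volume : Measure (EuclideanSpace ℝ (Fin m)))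
      ≤ ENNReal.ofReal εT * eLpNorm f 2 (volume : Measure (EuclideanSpace ℝ (Fin m))))
    (hconcΩ : eLpNorm (Ωᶜ.indicator (waveletTransform m ψ f)) 2 (waveletMeasure m)
      ≤ ENNReal.ofReal εΩ * eLpNorm (waveletTransform m ψ f) 2 (waveletMeasure m)) :
    eLpNorm (waveletTransform m ψ f) 2 (waveletMeasure m) ≤
      (ENNReal.ofReal Aψ * ENNReal.ofReal εT + (phiOmegaT m ψ Ω T) ^ (1 / 2 : ℝ)) /
          ENNReal.ofReal (1 - εΩ) *
        eLpNorm f 2 (volume : Measure (EuclideanSpace ℝ (Fin m))) := by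
  set μ := waveletMeasure m
  set W := waveletTransform m ψ
  have hmeas {g} (hg : MemLp g 2 volume) : AEStronglyMeasurable (W g) μ :=
    aestronglyMeasurable_waveletTransform hψ.1 hg.1
  have hsplit : W f =ᵐ[μ] W (T.indicator f) + W (Tᶜ.indicator f) := by
    filter_upwards [ae_waveletMeasure_fst_pos] with p hp
    rw [Pi.add_apply,
      ← waveletTransform_add hψ (hf2.indicator hT) (hf2.indicator hT.compl) hp.ne',
      indicator_self_add_compl]
  have hfinite : eLpNorm (W f) 2 μ ≠ ∞ := by
    rw [hParseval f hf2]
    exact ENNReal.mul_ne_top ENNReal.ofReal_ne_top hf2.eLpNorm_ne_top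
  rw [← ENNReal.mul_div_right_comm]
  refine ENNReal.le_div_one_sub_of_le_add_mul hεΩ₀ hεΩ₁ hfinite ?_
  calc eLpNorm (W f) 2 μ ≤ eLpNorm (Ω.indicator (W f)) 2 μ + eLpNorm (Ωᶜ.indicator (W f)) 2 μ :=
        eLpNorm_le_indicator_add_indicator_compl one_le_two (hmeas hf2) hΩ
    _ ≤ eLpNorm (Ω.indicator (W (T.indicator f))) 2 μ
          + eLpNorm (Ω.indicator (W (Tᶜ.indicator f))) 2 μ
          + ENNReal.ofReal εΩ * eLpNorm (W f) 2 μ := by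
        refine add_le_add ?_ hconcΩ
        rw [eLpNorm_congr_ae hsplit.indicator, indicator_add']
        exact eLpNorm_add_le ((hmeas (hf2.indicator hT)).indicator hΩ)
          ((hmeas (hf2.indicator hT.compl)).indicator hΩ) one_le_two
    _ ≤ phiOmegaT m ψ Ω T ^ (1 / 2 : ℝ) * eLpNorm f 2 volume
          + ENNReal.ofReal Aψ * (ENNReal.ofReal εT * eLpNorm f 2 volume)
          + ENNReal.ofReal εΩ * eLpNorm (W f) 2 μ := by
        gcongr
        · exact eLpNorm_indicator_waveletTransform_indicator_le hψ.1 hf2 hT hΩ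
        · calc _ ≤ eLpNorm (W (Tᶜ.indicator f)) 2 μ := eLpNorm_indicator_le _
            _ = _ := hParseval _ (hf2.indicator hT.compl)
            _ ≤ _ := by gcongr
    _ = _ := by ring

/-- **Donoho–Stark uncertainty principle for the wavelet transform:**
`‖T_ψ f‖_{L²(μ)} ≤ (A_ψ ε_T + φ_{Ω,T}(ψ)^{1/2}) / (1 − ε_Ω) · ‖f‖_{L²}`. -/
theorem donoho_stark_waveletTransform
    (m : ℕ) (hm : 1 ≤ m)
    (ψ f : EuclideanSpace ℝ (Fin m) → ℂ)
    (hψ : MemLp ψ 2 (volume : Measure (EuclideanSpace ℝ (Fin m))))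
    (hf1 : MemLp f 1 (volume : Measure (EuclideanSpace ℝ (Fin m))))
    (hf2 : MemLp f 2 (volume : Measure (EuclideanSpace ℝ (Fin m))))
    (T : Set (EuclideanSpace ℝ (Fin m))) (hT : MeasurableSet T)
    (Ω : Set (ℝ × EuclideanSpace ℝ (Fin m))) (hΩ : MeasurableSet Ω)
    (hΩ_sub : Ω ⊆ Set.Ioi (0 : ℝ) ×ˢ Set.univ)
    (εT εΩ : ℝ) (hεT : 0 ≤ εT) (hεΩ₀ : 0 ≤ εΩ) (hεΩ₁ : εΩ < 1)
    (Aψ : ℝ) (hAψ : 0 < Aψ)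
    (hParseval : ∀ g : EuclideanSpace ℝ (Fin m) → ℂ,
      MemLp g 2 (volume : Measure (EuclideanSpace ℝ (Fin m))) →
        eLpNorm (waveletTransform m ψ g) 2 (waveletMeasure m) =
          ENNReal.ofReal Aψ * eLpNorm g 2 (volume : Measure (EuclideanSpace ℝ (Fin m))))
    (hconcT : eLpNorm (Tᶜ.indicator f) 2 (volume : Measure (EuclideanSpace ℝ (Fin m)))
      ≤ ENNReal.ofReal εT * eLpNorm f 2 (volume : Measure (EuclideanSpace ℝ (Fin m))))
    (hconcΩ : eLpNorm (Ωᶜ.indicator (waveletTransform m ψ f)) 2 (waveletMeasure m)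
      ≤ ENNReal.ofReal εΩ * eLpNorm (waveletTransform m ψ f) 2 (waveletMeasure m)) :
    eLpNorm (waveletTransform m ψ f) 2 (waveletMeasure m) ≤
      (ENNReal.ofReal Aψ * ENNReal.ofReal εT + (phiOmegaT m ψ Ω T) ^ (1 / 2 : ℝ)) /
          ENNReal.ofReal (1 - εΩ) *
        eLpNorm f 2 (volume : Measure (EuclideanSpace ℝ (Fin m))) :=
  donoho_stark_waveletTransform_general m ψ f hψ hf2 T hT Ω hΩ εT εΩ hεΩ₀ hεΩ₁ Aψ hParseval hconcT
    hconcΩ
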